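/- Let A, B, X, Y be jointly distributed random variables with finite ranges such that the triple (A,X,Y) satisfies condition (B): for all a, x, y, if p(a,x) > 0 and p(a,y) > 0 then p(a,x,y) > 0. Then I(A:B) ≤ I(A:B | X) + I(A:B | Y) + Δ', where Δ' is the maximum over all triples (a,x,y) with p(a,x,y) > 0 of log₂( p(a,x)·p(a,y)·p(x,y) / ( p(a)·p(x)·p(y)·p(a,x,y) ) ). -/

import Mathlib

open Finset

noncomputable section

/-- Probability of an event under a distribution on a finite sample space. -/
def pr {Ω : Type*} [Fintype Ω] (p : Ω → ℝ) (E : Set Ω) : ℝ :=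
  ∑ ω, E.indicator p ω

/-- `p` is a probability mass function on the finite sample space `Ω`. -/
def IsPMF {Ω : Type*} [Fintype Ω] (p : Ω → ℝ) : Prop :=
  (∀ ω, 0 ≤ p ω) ∧ ∑ ω, p ω = 1

/-- Shannon entropy (base 2) of a random variable `V` on a finite sample space. -/
def ent {Ω β : Type*} [Fintype Ω] [Fintype β] (p : Ω → ℝ) (V : Ω → β) : ℝ :=
  -∑ v, pr p {ω | V ω = v} * Real.logb 2 (pr p {ω | V ω = v})

/-- Conditional Shannon entropy (base 2): `H(V | W)`. -/
def condEnt {Ω β γ : Type*} [Fintype Ω] [Fintype β] [Fintype γ]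
    (p : Ω → ℝ) (V : Ω → β) (W : Ω → γ) : ℝ :=
  ent p (fun ω => (V ω, W ω)) - ent p W

/-- Mutual information (base 2): `I(V : W)`. -/
def mi {Ω β γ : Type*} [Fintype Ω] [Fintype β] [Fintype γ]
    (p : Ω → ℝ) (V : Ω → β) (W : Ω → γ) : ℝ :=
  ent p V + ent p W - ent p (fun ω => (V ω, W ω))

/-- Conditional mutual information (base 2): `I(V : W | U)`. -/
def cmi {Ω β γ δ : Type*} [Fintype Ω] [Fintype β] [Fintype γ] [Fintype δ]
    (p : Ω → ℝ) (V : Ω → β) (W : Ω → γ) (U : Ω → δ) : ℝ :=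
  ent p (fun ω => (V ω, U ω)) + ent p (fun ω => (W ω, U ω))
    - ent p (fun ω => (V ω, W ω, U ω)) - ent p U

end


/-!
Write `q_X(a,b) = ∑ₓ p(a,x) p(b,x) / p(x)` for the law of `(A, B)` made conditionally
independent given `X`. Marginalizing out `X` cannot increase relative entropy, so
`I(A:B|X) ≥ ∑ p(a,b) log (p(a,b) / q_X(a,b))` (log-sum inequality), and likewise for `Y`.
Hence `I(A:B) - I(A:B|X) - I(A:B|Y) ≤ ∑ p(a,b) log (q_X q_Y / (p(a) p(b) p(a,b)))`, which by
Jensen is at most `log ∑_{a,b} q_X(a,b) q_Y(a,b) / (p(a) p(b))`. Expanded over `(a,b,x,y)`,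
condition (B) and the definition of `Δ'` bound `p(a,x) p(a,y) / (p(a) p(x) p(y))` by
`2^Δ' p(a,x,y) / p(x,y)`; summing out `a`, then `x`, `y` and `b`, leaves at most `2^Δ'`.
-/

open Real

section LogSum

lemma mul_log_div_le_sub {u v : ℝ} (hu : 0 ≤ u) (hv : 0 ≤ v) (huv : 0 < u → 0 < v) :
    u * log (v / u) ≤ v - u := by
  rcases hu.eq_or_lt with rfl | hu
  · simpa using hv
  · calc u * log (v / u) ≤ u * (v / u - 1) :=
          mul_le_mul_of_nonneg_left (log_le_sub_one_of_pos (div_pos (huv hu) hu)) hu.le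
      _ = v - u := by field_simp

lemma sum_pos_of_pos_imp_pos {ι : Type*} {s : Finset ι} {u v : ι → ℝ}
    (hv : ∀ i ∈ s, 0 ≤ v i) (huv : ∀ i ∈ s, 0 < u i → 0 < v i) (hu : 0 < ∑ i ∈ s, u i) :
    0 < ∑ i ∈ s, v i := by
  obtain ⟨i, hi, hui⟩ := exists_lt_of_sum_lt (by simpa using hu : ∑ i ∈ s, (0 : ℝ) < ∑ i ∈ s, u i)
  exact (huv i hi hui).trans_le (single_le_sum hv hi)

theorem mul_logb_div_le_sum_mul_logb_div {ι : Type*} (s : Finset ι) {b : ℝ} (hb : 1 < b)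
    {u v : ι → ℝ} (hu : ∀ i ∈ s, 0 ≤ u i) (hv : ∀ i ∈ s, 0 ≤ v i)
    (huv : ∀ i ∈ s, 0 < u i → 0 < v i) :
    (∑ i ∈ s, u i) * logb b ((∑ i ∈ s, u i) / ∑ i ∈ s, v i)
      ≤ ∑ i ∈ s, u i * logb b (u i / v i) := by
  simp only [logb, ← mul_div_assoc, ← sum_div]
  refine div_le_div_of_nonneg_right ?_ (log_pos hb).le
  set U := ∑ i ∈ s, u i
  set V := ∑ i ∈ s, v i
  rcases (sum_nonneg hu).eq_or_lt with hU | hU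
  · rw [show U = 0 from hU.symm, zero_mul]
    refine sum_nonneg fun i hi => ?_
    rw [(sum_eq_zero_iff_of_nonneg hu).1 hU.symm i hi, zero_mul]
  have hV : 0 < V := sum_pos_of_pos_imp_pos hv huv hU
  -- Gibbs' inequality against `v` rescaled to the total mass of `u`.
  have hgibbs : ∑ i ∈ s, u i * log (U / V * v i / u i) ≤ 0 := by
    calc ∑ i ∈ s, u i * log (U / V * v i / u i) ≤ ∑ i ∈ s, (U / V * v i - u i) :=
          sum_le_sum fun i hi => mul_log_div_le_sub (hu i hi) (by have := hv i hi; positivity)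
            fun h => by have := huv i hi h; positivity
      _ = 0 := by rw [sum_sub_distrib, ← mul_sum, div_mul_cancel₀ _ hV.ne', sub_self]
  have hsplit : ∀ i ∈ s,
      u i * log (U / V * v i / u i) = u i * log (U / V) - u i * log (u i / v i) := by
    intro i hi
    rcases (hu i hi).eq_or_lt with h | h
    · simp [← h]
    have := huv i hi h
    rw [mul_div_assoc, log_mul (by positivity) (by positivity), ← inv_div (u i), log_inv]
    ring
  rw [sum_congr rfl hsplit, sum_sub_distrib, ← sum_mul] at hgibbs
  linarith

theorem sum_mul_logb_div_sub_sub_le {ι : Type*} (s : Finset ι) {b : ℝ} (hb : 1 < b)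
    {u w s₁ s₂ : ι → ℝ} {κ : ℝ} (hu : ∀ i ∈ s, 0 ≤ u i) (hu1 : ∑ i ∈ s, u i = 1)
    (hw : ∀ i ∈ s, 0 ≤ w i) (hs₁ : ∀ i ∈ s, 0 ≤ s₁ i) (hs₂ : ∀ i ∈ s, 0 ≤ s₂ i)
    (hpos : ∀ i ∈ s, 0 < u i → 0 < w i ∧ 0 < s₁ i ∧ 0 < s₂ i)
    (hκ : ∑ i ∈ s, s₁ i * s₂ i / w i ≤ κ) :
    ∑ i ∈ s, u i * logb b (u i / w i) - ∑ i ∈ s, u i * logb b (u i / s₁ i)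
      - ∑ i ∈ s, u i * logb b (u i / s₂ i) ≤ logb b κ := by
  have hq0 : ∀ i ∈ s, 0 ≤ s₁ i * s₂ i / w i := fun i hi =>
    div_nonneg (mul_nonneg (hs₁ i hi) (hs₂ i hi)) (hw i hi)
  have hqpos : ∀ i ∈ s, 0 < u i → 0 < s₁ i * s₂ i / w i := fun i hi h => by
    obtain ⟨hwi, h₁, h₂⟩ := hpos i hi h
    positivity
  have hQ : 0 < ∑ i ∈ s, s₁ i * s₂ i / w i :=
    sum_pos_of_pos_imp_pos hq0 hqpos (hu1 ▸ one_pos)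
  have hlogsum := mul_logb_div_le_sum_mul_logb_div s hb hu hq0 hqpos
  rw [hu1, one_mul, one_div, logb_inv] at hlogsum
  have hsplit : ∀ i ∈ s, u i * logb b (u i / w i) - u i * logb b (u i / s₁ i)
      - u i * logb b (u i / s₂ i) = -(u i * logb b (u i / (s₁ i * s₂ i / w i))) := by
    intro i hi
    rcases (hu i hi).eq_or_lt with h | h
    · simp [← h]
    obtain ⟨hwi, h₁, h₂⟩ := hpos i hi h
    rw [logb_div h.ne' hwi.ne', logb_div h.ne' h₁.ne', logb_div h.ne' h₂.ne',
      logb_div h.ne' (by positivity), logb_div (by positivity) hwi.ne', logb_mul h₁.ne' h₂.ne']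
    ring
  calc _ = -∑ i ∈ s, u i * logb b (u i / (s₁ i * s₂ i / w i)) := by
        rw [← sum_sub_distrib, ← sum_sub_distrib, sum_congr rfl hsplit, sum_neg_distrib]
    _ ≤ logb b (∑ i ∈ s, s₁ i * s₂ i / w i) := by linarith
    _ ≤ logb b κ := logb_le_logb_of_le hb hQ hκ

end LogSum

section Probability

variable {Ω : Type*} [Fintype Ω] {p : Ω → ℝ}

lemma pr_nonneg (hp : ∀ ω, 0 ≤ p ω) (E : Set Ω) : 0 ≤ pr p E :=
  sum_nonneg fun ω _ => Set.indicator_nonneg (fun ω _ => hp ω) ω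

lemma pr_mono (hp : ∀ ω, 0 ≤ p ω) {E F : Set Ω} (h : E ⊆ F) : pr p E ≤ pr p F :=
  sum_le_sum fun ω _ => Set.indicator_le_indicator_of_subset h hp ω

lemma pr_pos_of_mem (hp : ∀ ω, 0 ≤ p ω) {E : Set Ω} {ω : Ω} (hω : ω ∈ E) (hpω : 0 < p ω) :
    0 < pr p E := by
  refine lt_of_lt_of_le ?_ (single_le_sum (fun ω _ => Set.indicator_nonneg (fun ω _ => hp ω) ω)
    (mem_univ ω))
  rwa [Set.indicator_of_mem hω]

lemma exists_mem_pos_of_pr_pos {E : Set Ω} (h : 0 < pr p E) : ∃ ω ∈ E, 0 < p ω := by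
  obtain ⟨ω, -, hω⟩ := exists_lt_of_sum_lt (by simpa using h : ∑ ω : Ω, (0 : ℝ) < pr p E)
  by_cases hE : ω ∈ E
  · exact ⟨ω, hE, by rwa [Set.indicator_of_mem hE] at hω⟩
  · simp [Set.indicator_of_notMem hE] at hω

variable {β γ δ : Type*} [Fintype β] [Fintype γ] [Fintype δ]

lemma sum_pr_mul (Z : Ω → β) (f : β → ℝ) :
    ∑ c, pr p {ω | Z ω = c} * f c = ∑ ω, p ω * f (Z ω) := by
  classical
  simp only [pr, Set.indicator_apply, Set.mem_ofPred_eq, sum_mul, ite_mul, zero_mul]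
  rw [sum_comm]
  simp

lemma sum_pr_eq_and (Z : Ω → β) (Q : Ω → Prop) :
    ∑ c, pr p {ω | Z ω = c ∧ Q ω} = pr p {ω | Q ω} := by
  classical
  simp only [pr, Set.indicator_apply, Set.mem_ofPred_eq]
  rw [sum_comm]
  refine sum_congr rfl fun ω _ => ?_
  by_cases h : Q ω <;> simp [h]

lemma sum_pr_and_eq (Q : Ω → Prop) (Z : Ω → β) :
    ∑ c, pr p {ω | Q ω ∧ Z ω = c} = pr p {ω | Q ω} := by
  simpa only [and_comm] using sum_pr_eq_and (p := p) Z Q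

lemma sum_pr_eq_one (hp : IsPMF p) (Z : Ω → β) : ∑ c, pr p {ω | Z ω = c} = 1 := by
  simpa [hp.2] using sum_pr_mul (p := p) Z (fun _ => 1)

lemma sum_pr_and_mul (V : Ω → β) (W : Ω → γ) (g : β → γ → ℝ) :
    ∑ v, ∑ w, pr p {ω | V ω = v ∧ W ω = w} * g v w = ∑ ω, p ω * g (V ω) (W ω) := by
  rw [← sum_pr_mul (fun ω => (V ω, W ω)) (fun c => g c.1 c.2)]
  simp only [Fintype.sum_prod_type, Prod.mk.injEq]

lemma sum_pr_and_and_mul (V : Ω → β) (W : Ω → γ) (U : Ω → δ) (g : β → γ → δ → ℝ) :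
    ∑ v, ∑ w, ∑ u, pr p {ω | V ω = v ∧ W ω = w ∧ U ω = u} * g v w u
      = ∑ ω, p ω * g (V ω) (W ω) (U ω) := by
  rw [← sum_pr_mul (fun ω => (V ω, W ω, U ω)) (fun c => g c.1 c.2.1 c.2.2)]
  simp only [Fintype.sum_prod_type, Prod.mk.injEq]

end Probability

section Entropy

variable {Ω β γ δ : Type*} [Fintype Ω] [Fintype β] [Fintype γ] [Fintype δ] {p : Ω → ℝ}

lemma ent_eq_sum (V : Ω → β) :
    ent p V = -∑ ω, p ω * logb 2 (pr p {ω' | V ω' = V ω}) := by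
  rw [ent, sum_pr_mul V fun v => logb 2 (pr p {ω | V ω = v})]

lemma mi_eq_sum (hp : ∀ ω, 0 ≤ p ω) (V : Ω → β) (W : Ω → γ) :
    mi p V W = ∑ v, ∑ w, pr p {ω | V ω = v ∧ W ω = w} *
      logb 2 (pr p {ω | V ω = v ∧ W ω = w} / (pr p {ω | V ω = v} * pr p {ω | W ω = w})) := by
  rw [sum_pr_and_mul V W fun v w => logb 2
    (pr p {ω | V ω = v ∧ W ω = w} / (pr p {ω | V ω = v} * pr p {ω | W ω = w}))]
  simp only [mi, ent_eq_sum, Prod.mk.injEq, ← sum_neg_distrib, ← sum_add_distrib,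
    ← sum_sub_distrib]
  refine sum_congr rfl fun ω _ => ?_
  rcases (hp ω).eq_or_lt with h | h
  · simp [← h]
  have hV := pr_pos_of_mem hp (E := {ω' | V ω' = V ω}) rfl h
  have hW := pr_pos_of_mem hp (E := {ω' | W ω' = W ω}) rfl h
  have hVW := pr_pos_of_mem hp (E := {ω' | V ω' = V ω ∧ W ω' = W ω}) ⟨rfl, rfl⟩ h
  rw [logb_div hVW.ne' (by positivity), logb_mul hV.ne' hW.ne']
  ring

lemma cmi_eq_sum (hp : ∀ ω, 0 ≤ p ω) (V : Ω → β) (W : Ω → γ) (U : Ω → δ) :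
    cmi p V W U = ∑ v, ∑ w, ∑ u, pr p {ω | V ω = v ∧ W ω = w ∧ U ω = u} *
      logb 2 (pr p {ω | V ω = v ∧ W ω = w ∧ U ω = u} /
        (pr p {ω | V ω = v ∧ U ω = u} * pr p {ω | W ω = w ∧ U ω = u} / pr p {ω | U ω = u})) := by
  rw [sum_pr_and_and_mul V W U fun v w u => logb 2 (pr p {ω | V ω = v ∧ W ω = w ∧ U ω = u} /
    (pr p {ω | V ω = v ∧ U ω = u} * pr p {ω | W ω = w ∧ U ω = u} / pr p {ω | U ω = u}))]
  simp only [cmi, ent_eq_sum, Prod.mk.injEq, ← sum_neg_distrib, ← sum_add_distrib,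
    ← sum_sub_distrib]
  refine sum_congr rfl fun ω _ => ?_
  rcases (hp ω).eq_or_lt with h | h
  · simp [← h]
  have hU := pr_pos_of_mem hp (E := {ω' | U ω' = U ω}) rfl h
  have hVU := pr_pos_of_mem hp (E := {ω' | V ω' = V ω ∧ U ω' = U ω}) ⟨rfl, rfl⟩ h
  have hWU := pr_pos_of_mem hp (E := {ω' | W ω' = W ω ∧ U ω' = U ω}) ⟨rfl, rfl⟩ h
  have hVWU := pr_pos_of_mem hp (E := {ω' | V ω' = V ω ∧ W ω' = W ω ∧ U ω' = U ω})
    ⟨rfl, rfl, rfl⟩ h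
  rw [logb_div hVWU.ne' (by positivity), logb_div (by positivity) hU.ne',
    logb_mul hVU.ne' hWU.ne']
  ring

end Entropy

section CondIndepLaw

variable {Ω β γ δ : Type*} [Fintype Ω] [Fintype δ] {p : Ω → ℝ}

noncomputable def condIndepLaw (p : Ω → ℝ) (V : Ω → β) (W : Ω → γ) (U : Ω → δ) (v : β) (w : γ) :
    ℝ :=
  ∑ u, pr p {ω | V ω = v ∧ U ω = u} * pr p {ω | W ω = w ∧ U ω = u} / pr p {ω | U ω = u}

lemma condIndepLaw_nonneg (hp : ∀ ω, 0 ≤ p ω) (V : Ω → β) (W : Ω → γ) (U : Ω → δ)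
    (v : β) (w : γ) : 0 ≤ condIndepLaw p V W U v w :=
  sum_nonneg fun _ _ => div_nonneg (mul_nonneg (pr_nonneg hp _) (pr_nonneg hp _)) (pr_nonneg hp _)

lemma condIndepLaw_pos (hp : ∀ ω, 0 ≤ p ω) {V : Ω → β} {W : Ω → γ} (U : Ω → δ) {v : β} {w : γ}
    (h : 0 < pr p {ω | V ω = v ∧ W ω = w}) : 0 < condIndepLaw p V W U v w := by
  obtain ⟨ω, ⟨rfl, rfl⟩, hω⟩ := exists_mem_pos_of_pr_pos h
  have hVU := pr_pos_of_mem hp (E := {ω' | V ω' = V ω ∧ U ω' = U ω}) ⟨rfl, rfl⟩ hω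
  have hWU := pr_pos_of_mem hp (E := {ω' | W ω' = W ω ∧ U ω' = U ω}) ⟨rfl, rfl⟩ hω
  have hU := pr_pos_of_mem hp (E := {ω' | U ω' = U ω}) rfl hω
  exact lt_of_lt_of_le (by positivity)
    (single_le_sum (fun u _ => div_nonneg (mul_nonneg (pr_nonneg hp _) (pr_nonneg hp _))
      (pr_nonneg hp _)) (mem_univ (U ω)))

theorem sum_mul_logb_div_condIndepLaw_le_cmi [Fintype β] [Fintype γ] (hp : ∀ ω, 0 ≤ p ω)
    (V : Ω → β) (W : Ω → γ) (U : Ω → δ) :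
    ∑ v, ∑ w, pr p {ω | V ω = v ∧ W ω = w} *
        logb 2 (pr p {ω | V ω = v ∧ W ω = w} / condIndepLaw p V W U v w)
      ≤ cmi p V W U := by
  rw [cmi_eq_sum hp]
  refine sum_le_sum fun v _ => sum_le_sum fun w _ => ?_
  have hmarg : ∑ u, pr p {ω | V ω = v ∧ W ω = w ∧ U ω = u} = pr p {ω | V ω = v ∧ W ω = w} := by
    simpa only [and_assoc] using sum_pr_and_eq (p := p) (fun ω => V ω = v ∧ W ω = w) U
  rw [← hmarg, condIndepLaw]
  refine mul_logb_div_le_sum_mul_logb_div univ one_lt_two (fun u _ => pr_nonneg hp _)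
    (fun u _ => div_nonneg (mul_nonneg (pr_nonneg hp _) (pr_nonneg hp _)) (pr_nonneg hp _))
    fun u _ h => ?_
  have hVU : 0 < pr p {ω | V ω = v ∧ U ω = u} := h.trans_le (pr_mono hp fun ω hω => ⟨hω.1, hω.2.2⟩)
  have hWU : 0 < pr p {ω | W ω = w ∧ U ω = u} := h.trans_le (pr_mono hp fun ω hω => hω.2)
  have hU : 0 < pr p {ω | U ω = u} := h.trans_le (pr_mono hp fun ω hω => hω.2.2)
  positivity

end CondIndepLaw

section KeyEstimate

variable {Ω α β χ υ : Type*} [Fintype Ω] {p : Ω → ℝ}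

def ConditionB (p : Ω → ℝ) (A : Ω → α) (X : Ω → χ) (Y : Ω → υ) : Prop :=
  ∀ a x y, 0 < pr p {ω | A ω = a ∧ X ω = x} → 0 < pr p {ω | A ω = a ∧ Y ω = y} →
    0 < pr p {ω | A ω = a ∧ X ω = x ∧ Y ω = y}

noncomputable def tripleRatio (p : Ω → ℝ) (A : Ω → α) (X : Ω → χ) (Y : Ω → υ)
    (a : α) (x : χ) (y : υ) : ℝ :=
  pr p {ω | A ω = a ∧ X ω = x} * pr p {ω | A ω = a ∧ Y ω = y} * pr p {ω | X ω = x ∧ Y ω = y}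
    / (pr p {ω | A ω = a} * pr p {ω | X ω = x} * pr p {ω | Y ω = y}
      * pr p {ω | A ω = a ∧ X ω = x ∧ Y ω = y})

lemma sum_pr_mul_pr_div_le [Fintype α] (hp : ∀ ω, 0 ≤ p ω) {A : Ω → α} {X : Ω → χ} {Y : Ω → υ}
    (hB : ConditionB p A X Y) {κ : ℝ} (hκ0 : 0 ≤ κ)
    (hκ : ∀ a x y, 0 < pr p {ω | A ω = a ∧ X ω = x ∧ Y ω = y} → tripleRatio p A X Y a x y ≤ κ)
    (x : χ) (y : υ) :
    ∑ a, pr p {ω | A ω = a ∧ X ω = x} * pr p {ω | A ω = a ∧ Y ω = y}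
      / (pr p {ω | A ω = a} * pr p {ω | X ω = x} * pr p {ω | Y ω = y}) ≤ κ := by
  have nn := pr_nonneg hp
  have hratio : ∀ a, pr p {ω | A ω = a ∧ X ω = x} * pr p {ω | A ω = a ∧ Y ω = y}
      / (pr p {ω | A ω = a} * pr p {ω | X ω = x} * pr p {ω | Y ω = y})
      ≤ κ * (pr p {ω | A ω = a ∧ X ω = x ∧ Y ω = y} / pr p {ω | X ω = x ∧ Y ω = y}) := by
    intro a
    rcases (nn {ω | A ω = a ∧ X ω = x}).eq_or_lt with hAX | hAX
    · rw [← hAX, zero_mul, zero_div]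
      exact mul_nonneg hκ0 (div_nonneg (nn _) (nn _))
    rcases (nn {ω | A ω = a ∧ Y ω = y}).eq_or_lt with hAY | hAY
    · rw [← hAY, mul_zero, zero_div]
      exact mul_nonneg hκ0 (div_nonneg (nn _) (nn _))
    have hAXY := hB a x y hAX hAY
    have hXY : 0 < pr p {ω | X ω = x ∧ Y ω = y} := hAXY.trans_le (pr_mono hp fun ω h => h.2)
    have hA : 0 < pr p {ω | A ω = a} := hAX.trans_le (pr_mono hp fun ω h => h.1)
    have hX : 0 < pr p {ω | X ω = x} := hAX.trans_le (pr_mono hp fun ω h => h.2)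
    have hY : 0 < pr p {ω | Y ω = y} := hAY.trans_le (pr_mono hp fun ω h => h.2)
    calc _ = tripleRatio p A X Y a x y
            * (pr p {ω | A ω = a ∧ X ω = x ∧ Y ω = y} / pr p {ω | X ω = x ∧ Y ω = y}) := by
          rw [tripleRatio]
          field_simp
      _ ≤ _ := mul_le_mul_of_nonneg_right (hκ a x y hAXY) (div_nonneg (nn _) (nn _))
  calc _ ≤ ∑ a, κ * (pr p {ω | A ω = a ∧ X ω = x ∧ Y ω = y} / pr p {ω | X ω = x ∧ Y ω = y}) :=
        sum_le_sum fun a _ => hratio a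
    _ = κ * (pr p {ω | X ω = x ∧ Y ω = y} / pr p {ω | X ω = x ∧ Y ω = y}) := by
        rw [← mul_sum, ← sum_div, sum_pr_eq_and A fun ω => X ω = x ∧ Y ω = y]
    _ ≤ κ := mul_le_of_le_one_right hκ0 (div_self_le_one _)

theorem sum_condIndepLaw_mul_div_le [Fintype α] [Fintype β] [Fintype χ] [Fintype υ]
    (hp : IsPMF p)
    {A : Ω → α} (B : Ω → β) {X : Ω → χ} {Y : Ω → υ} (hB : ConditionB p A X Y)
    {κ : ℝ} (hκ0 : 0 ≤ κ)
    (hκ : ∀ a x y, 0 < pr p {ω | A ω = a ∧ X ω = x ∧ Y ω = y} → tripleRatio p A X Y a x y ≤ κ) :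
    ∑ a, ∑ b, condIndepLaw p A B X a b * condIndepLaw p A B Y a b
      / (pr p {ω | A ω = a} * pr p {ω | B ω = b}) ≤ κ := by
  have nn := pr_nonneg hp.1
  calc _ = ∑ a, ∑ b, ∑ x, ∑ y,
        pr p {ω | B ω = b ∧ X ω = x} * pr p {ω | B ω = b ∧ Y ω = y} / pr p {ω | B ω = b}
          * (pr p {ω | A ω = a ∧ X ω = x} * pr p {ω | A ω = a ∧ Y ω = y}
            / (pr p {ω | A ω = a} * pr p {ω | X ω = x} * pr p {ω | Y ω = y})) := by
        refine sum_congr rfl fun a _ => sum_congr rfl fun b _ => ?_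
        rw [condIndepLaw, condIndepLaw, sum_mul_sum, sum_div]
        refine sum_congr rfl fun x _ => ?_
        rw [sum_div]
        exact sum_congr rfl fun y _ => by ring
    _ = ∑ b, ∑ x, ∑ y,
        pr p {ω | B ω = b ∧ X ω = x} * pr p {ω | B ω = b ∧ Y ω = y} / pr p {ω | B ω = b}
          * ∑ a, pr p {ω | A ω = a ∧ X ω = x} * pr p {ω | A ω = a ∧ Y ω = y}
            / (pr p {ω | A ω = a} * pr p {ω | X ω = x} * pr p {ω | Y ω = y}) := by
        rw [sum_comm]
        refine sum_congr rfl fun b _ => ?_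
        rw [sum_comm]
        refine sum_congr rfl fun x _ => ?_
        rw [sum_comm]
        exact sum_congr rfl fun y _ => (mul_sum _ _ _).symm
    _ ≤ ∑ b, ∑ x, ∑ y,
        pr p {ω | B ω = b ∧ X ω = x} * pr p {ω | B ω = b ∧ Y ω = y} / pr p {ω | B ω = b} * κ :=
        sum_le_sum fun b _ => sum_le_sum fun x _ => sum_le_sum fun y _ =>
          mul_le_mul_of_nonneg_left (sum_pr_mul_pr_div_le hp.1 hB hκ0 hκ x y)
            (div_nonneg (mul_nonneg (nn _) (nn _)) (nn _))
    _ = κ * ∑ b, (∑ x, pr p {ω | B ω = b ∧ X ω = x}) * (∑ y, pr p {ω | B ω = b ∧ Y ω = y})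
          / pr p {ω | B ω = b} := by
        rw [mul_sum]
        refine sum_congr rfl fun b _ => ?_
        rw [sum_mul_sum, sum_div, mul_sum]
        refine sum_congr rfl fun x _ => ?_
        rw [sum_div, mul_sum]
        exact sum_congr rfl fun y _ => by ring
    _ = κ := by
        simp only [sum_pr_and_eq, mul_self_div_self, sum_pr_eq_one hp, mul_one]

theorem mi_le_cmi_add_cmi_add_logb [Fintype α] [Fintype β] [Fintype χ] [Fintype υ]
    (hp : IsPMF p)
    {A : Ω → α} {B : Ω → β} {X : Ω → χ} {Y : Ω → υ} (hB : ConditionB p A X Y)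
    {κ : ℝ} (hκ0 : 0 ≤ κ)
    (hκ : ∀ a x y, 0 < pr p {ω | A ω = a ∧ X ω = x ∧ Y ω = y} → tripleRatio p A X Y a x y ≤ κ) :
    mi p A B ≤ cmi p A B X + cmi p A B Y + logb 2 κ := by
  have nn := pr_nonneg hp.1
  have key := sum_mul_logb_div_sub_sub_le (univ : Finset (α × β)) one_lt_two
    (u := fun c => pr p {ω | A ω = c.1 ∧ B ω = c.2})
    (w := fun c => pr p {ω | A ω = c.1} * pr p {ω | B ω = c.2})
    (s₁ := fun c => condIndepLaw p A B X c.1 c.2) (s₂ := fun c => condIndepLaw p A B Y c.1 c.2)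
    (fun c _ => nn _)
    (by simp only [Fintype.sum_prod_type, sum_pr_and_eq, sum_pr_eq_one hp])
    (fun c _ => mul_nonneg (nn _) (nn _)) (fun c _ => condIndepLaw_nonneg hp.1 _ _ _ _ _)
    (fun c _ => condIndepLaw_nonneg hp.1 _ _ _ _ _)
    (fun c _ h => ⟨mul_pos (h.trans_le (pr_mono hp.1 fun ω h => h.1))
      (h.trans_le (pr_mono hp.1 fun ω h => h.2)), condIndepLaw_pos hp.1 X h,
      condIndepLaw_pos hp.1 Y h⟩)
    (by simpa only [Fintype.sum_prod_type] using
      sum_condIndepLaw_mul_div_le hp B hB hκ0 hκ)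
  simp only [Fintype.sum_prod_type] at key
  rw [mi_eq_sum hp.1]
  linarith [sum_mul_logb_div_condIndepLaw_le_cmi hp.1 A B X,
    sum_mul_logb_div_condIndepLaw_le_cmi hp.1 A B Y]

end KeyEstimate

lemma bddAbove_setOf_exists {α χ υ : Type*} [Finite α] [Finite χ] [Finite υ]
    (P : α → χ → υ → Prop) (f : α → χ → υ → ℝ) :
    BddAbove {z : ℝ | ∃ a x y, P a x y ∧ z = f a x y} :=
  ((Set.finite_range fun t : α × χ × υ => f t.1 t.2.1 t.2.2).subset
    (by rintro z ⟨a, x, y, -, rfl⟩; exact ⟨(a, x, y), rfl⟩)).bddAbove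

/-- Theorem 2: under condition (B), `I(A:B) ≤ I(A:B|X) + I(A:B|Y) + Δ'`, where `Δ'`
is the maximum of `log₂(p(a,x)p(a,y)p(x,y) / (p(a)p(x)p(y)p(a,x,y)))` over all
triples with `p(a,x,y) > 0`. -/
theorem stmt_8 {Ω α β χ υ : Type*}
    [Fintype Ω] [Fintype α] [Fintype β] [Fintype χ] [Fintype υ]
    (p : Ω → ℝ) (hp : IsPMF p)
    (A : Ω → α) (B : Ω → β) (X : Ω → χ) (Y : Ω → υ)
    (hB : ∀ (a : α) (x : χ) (y : υ),
      0 < pr p {ω | A ω = a ∧ X ω = x} →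
      0 < pr p {ω | A ω = a ∧ Y ω = y} →
      0 < pr p {ω | A ω = a ∧ X ω = x ∧ Y ω = y}) :
    mi p A B ≤ cmi p A B X + cmi p A B Y +
      sSup {z : ℝ | ∃ (a : α) (x : χ) (y : υ),
        0 < pr p {ω | A ω = a ∧ X ω = x ∧ Y ω = y} ∧
        z = Real.logb 2
          (pr p {ω | A ω = a ∧ X ω = x} * pr p {ω | A ω = a ∧ Y ω = y}
              * pr p {ω | X ω = x ∧ Y ω = y}
            / (pr p {ω | A ω = a} * pr p {ω | X ω = x} * pr p {ω | Y ω = y}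
                * pr p {ω | A ω = a ∧ X ω = x ∧ Y ω = y}))} := by
  refine (mi_le_cmi_add_cmi_add_logb hp hB (rpow_pos_of_pos two_pos _).le
    fun a x y hAXY => ?_).trans_eq (by rw [logb_rpow two_pos (by norm_num)])
  by_contra! h
  exact h.not_ge ((logb_le_iff_le_rpow one_lt_two ((rpow_pos_of_pos two_pos _).trans h)).1
    (le_csSup (bddAbove_setOf_exists _ _) ⟨a, x, y, hAXY, rfl⟩))
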